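/- (Pons Asinorum) Suppose U, V, W are nonzero vectors with a_U, a_V, a_W all nonzero, with the projective quadrances q_u = q(V,W), q_v = q(U,W), q_w = q(U,V) all nonzero, with all three quantities a_U·a_V − b_{UV}², a_U·a_W − b_{UW}², a_V·a_W − b_{VW}² nonzero, and with the projective spread S_w ≠ 0. Then q_u = q_v if and only if S_u = S_v. -/
import Mathlib


/-- The projective quadrance between the projective points `[U]` and `[V]`. -/
def projQuadrance {F : Type*} [Field F] {M : Type*} [AddCommGroup M] [Module F M]
    (B : LinearMap.BilinForm F M) (U V : M) : F :=
  1 - (B U V) ^ 2 / (B U U * B V V)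

/-- The projective spread between the projective lines `WU` and `WV`
(the spread at the vertex `[W]`). -/
def projSpread {F : Type*} [Field F] {M : Type*} [AddCommGroup M] [Module F M]
    (B : LinearMap.BilinForm F M) (W U V : M) : F :=
  1 - (B W W * B U V - B U W * B V W) ^ 2 /
      ((B U U * B W W - (B U W) ^ 2) * (B V V * B W W - (B V W) ^ 2))

lemma pons_aux {F : Type*} [Field F] (a b c p q r : F)
    (ha : a ≠ 0) (hb : b ≠ 0) (hc : c ≠ 0)
    (hab : a * b - p ^ 2 ≠ 0) (hac : a * c - q ^ 2 ≠ 0) (hbc : b * c - r ^ 2 ≠ 0)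
    (hqw : 1 - p ^ 2 / (a * b) ≠ 0)
    (hSw : 1 - (c * p - q * r) ^ 2 / ((a * c - q ^ 2) * (b * c - r ^ 2)) ≠ 0) :
    (1 - r ^ 2 / (b * c) = 1 - q ^ 2 / (a * c)) ↔
      (1 - (a * r - p * q) ^ 2 / ((b * a - p ^ 2) * (c * a - q ^ 2)) =
        1 - (b * q - p * r) ^ 2 / ((a * b - p ^ 2) * (c * b - r ^ 2))) := by
  have hba : b * a - p ^ 2 ≠ 0 := by rw [mul_comm]; exact hab
  have hca : c * a - q ^ 2 ≠ 0 := by rw [mul_comm]; exact hac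
  have hcb : c * b - r ^ 2 ≠ 0 := by rw [mul_comm]; exact hbc
  set Su : F := 1 - (a * r - p * q) ^ 2 / ((b * a - p ^ 2) * (c * a - q ^ 2)) with hSu
  set Sv : F := 1 - (b * q - p * r) ^ 2 / ((a * b - p ^ 2) * (c * b - r ^ 2)) with hSv
  set Sw : F := 1 - (c * p - q * r) ^ 2 / ((a * c - q ^ 2) * (b * c - r ^ 2)) with hSw'
  set qu : F := 1 - r ^ 2 / (b * c) with hqu'
  set qv : F := 1 - q ^ 2 / (a * c) with hqv'
  set qw : F := 1 - p ^ 2 / (a * b) with hqw'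
  have L1 : Su * qw = Sw * qu := by
    rw [hSu, hqw', hSw', hqu']
    field_simp
    ring
  have L2 : Sv * qw = Sw * qv := by
    rw [hSv, hqw', hSw', hqv']
    field_simp
    ring
  constructor
  · intro h
    have h2 : Su * qw = Sv * qw := by rw [L1, L2, h]
    exact mul_right_cancel₀ hqw h2
  · intro h
    have h2 : Sw * qu = Sw * qv := by rw [← L1, ← L2, h]
    exact mul_left_cancel₀ hSw h2

theorem pons_asinorum
    {F : Type*} [Field F] (hchar : (2 : F) ≠ 0)
    {M : Type*} [AddCommGroup M] [Module F M]
    (B : LinearMap.BilinForm F M) (hsym : ∀ x y : M, B x y = B y x)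
    (U V W : M) (hU : U ≠ 0) (hV : V ≠ 0) (hW : W ≠ 0)
    (haU : B U U ≠ 0) (haV : B V V ≠ 0) (haW : B W W ≠ 0)
    (hqu : projQuadrance B V W ≠ 0) (hqv : projQuadrance B U W ≠ 0)
    (hqw : projQuadrance B U V ≠ 0)
    (hdUV : B U U * B V V - (B U V) ^ 2 ≠ 0)
    (hdUW : B U U * B W W - (B U W) ^ 2 ≠ 0)
    (hdVW : B V V * B W W - (B V W) ^ 2 ≠ 0)
    (hSw : projSpread B W U V ≠ 0) :
    projQuadrance B V W = projQuadrance B U W ↔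
      projSpread B U V W = projSpread B V U W := by
  have hVU : B V U = B U V := hsym V U
  have hWU : B W U = B U W := hsym W U
  have hWV : B W V = B V W := hsym W V
  simp only [projQuadrance, projSpread] at hqw hSw ⊢
  rw [hVU, hWU, hWV]
  exact pons_aux (B U U) (B V V) (B W W) (B U V) (B U W) (B V W)
    haU haV haW hdUV hdUW hdVW hqw hSw
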